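/- For all α ∈ F with α ≠ 0 and all β ∈ F: χ(α,β)^2 = χ(0, α^{1+r}), χ(α,β)^3 = χ(α, β + α^{1+r}), and χ(α,β)^4 = 1; in particular χ(α,β) has order 4 and the cyclic group it generates is {1, χ(α,β), χ(0,α^{1+r}), χ(α,β+α^{1+r})}. -/

import Mathlib

/-!
In characteristic 2 the map `x ↦ x ^ r` is additive, which makes `χ(0, γ) * χ(α, β) = χ(α, β + γ)`;
in particular the `χ(0, γ)` form an elementary abelian 2-group. Since `r ^ 2 = 2q`, we have
`α ^ (r * r) = α ^ 2` in `F`, and this is exactly what is needed for `χ(α, β) ^ 2 = χ(0, α ^ (1 + r))`.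
Hence `χ(α, β) ^ 4 = 1`, while `χ(α, β) ^ 2 ≠ 1` as soon as `α ≠ 0`.
-/

open Matrix

noncomputable section

/-- `r = 2^((m+1)/2)`. -/
def szr (m : ℕ) : ℕ := 2 ^ ((m + 1) / 2)

/-- The Suzuki group generator `χ(α,β)`, a lower unitriangular 4×4 matrix. -/
def szchi {F : Type*} [Field F] (m : ℕ) (α β : F) : Matrix (Fin 4) (Fin 4) F :=
  !![1, 0, 0, 0;
     α, 1, 0, 0;
     α ^ (1 + szr m) + β, α ^ szr m, 1, 0;
     α ^ (2 + szr m) + α * β + β ^ szr m, β, α, 1]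

lemma szr_ne_zero (m : ℕ) : szr m ≠ 0 := by simp [szr]

lemma szr_mul_self {m : ℕ} (hm : Odd m) : szr m * szr m = 2 ^ m * 2 := by
  obtain ⟨k, rfl⟩ := hm
  rw [szr, ← pow_add, ← pow_succ]
  congr 1
  omega

lemma pow_szr_mul_self {F : Type*} [Field F] [Fintype F] {m : ℕ} (hm : Odd m)
    (hF : Fintype.card F = 2 ^ m) (x : F) : x ^ (szr m * szr m) = x ^ 2 := by
  rw [szr_mul_self hm, pow_mul, ← hF, FiniteField.pow_card]

lemma setOf_exists_eq_pow_of_pow_four_eq_one {M : Type*} [Monoid M] {x : M} (hx : x ^ 4 = 1) :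
    {y : M | ∃ n : ℕ, y = x ^ n} = {1, x, x ^ 2, x ^ 3} := by
  ext y
  simp only [Set.mem_ofPred_eq, Set.mem_insert_iff, Set.mem_singleton_iff]
  constructor
  · rintro ⟨n, rfl⟩
    rw [pow_eq_pow_mod n hx]
    have : n % 4 < 4 := n.mod_lt four_pos
    interval_cases n % 4 <;> simp
  · rintro (rfl | rfl | rfl | rfl)
    exacts [⟨0, (pow_zero _).symm⟩, ⟨1, (pow_one _).symm⟩, ⟨2, rfl⟩, ⟨3, rfl⟩]

section
variable {F : Type*} [Field F] (m : ℕ)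

lemma szchi_zero_zero : szchi m (0 : F) 0 = 1 := by
  ext i j
  fin_cases i <;> fin_cases j <;> simp [szchi, one_apply, szr_ne_zero]

lemma szchi_zero_ne_one {γ : F} (hγ : γ ≠ 0) : szchi m 0 γ ≠ 1 := fun h ↦
  hγ (by simpa [szchi, szr_ne_zero] using congrFun (congrFun h 2) 0)

variable [CharP F 2]

lemma add_pow_szr (x y : F) : (x + y) ^ szr m = x ^ szr m + y ^ szr m :=
  add_pow_char_pow x y 2 _

lemma szchi_zero_mul (α β γ : F) : szchi m 0 γ * szchi m α β = szchi m α (β + γ) := by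
  ext i j
  fin_cases i <;> fin_cases j <;>
    simp only [szchi, mul_apply, Fin.sum_univ_four, Fin.zero_eta, Fin.mk_one,
      Fin.reduceFinMk, Fin.isValue, of_apply, cons_val', cons_val, cons_val_zero, cons_val_one,
      cons_val_fin_one, zero_pow (szr_ne_zero m), add_pow_szr] <;>
    grind

lemma szchi_zero_sq (γ : F) : szchi m 0 γ ^ 2 = 1 := by
  rw [sq, szchi_zero_mul, CharTwo.add_self_eq_zero, szchi_zero_zero]

lemma szchi_sq {α : F} (hα : α ^ (szr m * szr m) = α ^ 2) (β : F) :
    szchi m α β ^ 2 = szchi m 0 (α ^ (1 + szr m)) := by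
  have frob : (α ^ (1 + szr m)) ^ szr m = α ^ (2 + szr m) := by
    rw [← pow_mul, add_mul, one_mul, pow_add, hα, ← pow_add, add_comm]
  ext i j
  fin_cases i <;> fin_cases j <;>
    simp only [szchi, sq, mul_apply, Fin.sum_univ_four, Fin.zero_eta, Fin.mk_one,
      Fin.reduceFinMk, Fin.isValue, of_apply, cons_val', cons_val, cons_val_zero, cons_val_one,
      cons_val_fin_one, zero_pow (szr_ne_zero m), frob] <;>
    grind

lemma szchi_cube {α : F} (hα : α ^ (szr m * szr m) = α ^ 2) (β : F) :
    szchi m α β ^ 3 = szchi m α (β + α ^ (1 + szr m)) := by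
  rw [pow_succ, szchi_sq m hα, szchi_zero_mul]

end

theorem statement_5_general (m : ℕ) (hm : Odd m)
    (F : Type*) [Field F] [Fintype F] (hF : Fintype.card F = 2 ^ m)
    (α β : F) (hα : α ≠ 0) :
    szchi m α β ^ 2 = szchi m 0 (α ^ (1 + szr m)) ∧
    szchi m α β ^ 3 = szchi m α (β + α ^ (1 + szr m)) ∧
    szchi m α β ^ 4 = 1 ∧
    orderOf (szchi m α β) = 4 ∧
    {M : Matrix (Fin 4) (Fin 4) F | ∃ n : ℕ, M = szchi m α β ^ n}
      = {1, szchi m α β, szchi m 0 (α ^ (1 + szr m)), szchi m α (β + α ^ (1 + szr m))} := by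
  have : CharP F 2 := charP_of_card_eq_prime_pow hF
  have frob := pow_szr_mul_self hm hF α
  have hsq := szchi_sq m frob β
  have hcube := szchi_cube m frob β
  have hfour : szchi m α β ^ 4 = 1 := by
    rw [← szchi_zero_sq m (α ^ (1 + szr m)), ← hsq, ← pow_mul]
  have hsq_ne_one : szchi m α β ^ 2 ^ 1 ≠ 1 := by
    rw [pow_one, hsq]
    exact szchi_zero_ne_one m (pow_ne_zero _ hα)
  refine ⟨hsq, hcube, hfour, orderOf_eq_prime_pow hsq_ne_one hfour, ?_⟩
  rw [setOf_exists_eq_pow_of_pow_four_eq_one hfour, hsq, hcube]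

/-- for `α ≠ 0`, `χ(α,β)² = χ(0,α^{1+r})`, `χ(α,β)³ = χ(α,β+α^{1+r})`,
`χ(α,β)⁴ = 1`; `χ(α,β)` has order 4 and
`⟨χ(α,β)⟩ = {1, χ(α,β), χ(0,α^{1+r}), χ(α,β+α^{1+r})}`. -/
theorem statement_5 (m : ℕ) (hm : Odd m) (hm3 : 3 ≤ m)
    (F : Type*) [Field F] [Fintype F] (hF : Fintype.card F = 2 ^ m)
    (α β : F) (hα : α ≠ 0) :
    szchi m α β ^ 2 = szchi m 0 (α ^ (1 + szr m)) ∧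
    szchi m α β ^ 3 = szchi m α (β + α ^ (1 + szr m)) ∧
    szchi m α β ^ 4 = 1 ∧
    orderOf (szchi m α β) = 4 ∧
    {M : Matrix (Fin 4) (Fin 4) F | ∃ n : ℕ, M = szchi m α β ^ n}
      = {1, szchi m α β, szchi m 0 (α ^ (1 + szr m)), szchi m α (β + α ^ (1 + szr m))} :=
  statement_5_general m hm F hF α β hα
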